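/- Let S be a Levi monoid. Then S has a maximum proper principal two-sided ideal (a proper principal two-sided ideal containing every proper principal two-sided ideal of S) if and only if S is irreducible, i.e. for any two atoms x, y of S there exist units g, h with y = gxh. -/

import Mathlib

/-- A length function on a monoid: a homomorphism to (ℕ, +) whose zero set is
exactly the set of units. -/
def IsLengthFunction {S : Type*} [Monoid S] (l : S → ℕ) : Prop :=
  (∀ a b : S, l (a * b) = l a + l b) ∧ ∀ a : S, l a = 0 ↔ IsUnit a

/-- An equidivisible monoid. -/
def Equidivisible (S : Type*) [Monoid S] : Prop :=
  ∀ a b c d : S, a * b = c * d →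
    (∃ u : S, a = c * u ∧ d = u * b) ∨ ∃ v : S, c = a * v ∧ b = v * d

/-- A Levi monoid: an equidivisible monoid equipped with a length function and
containing at least one non-unit. -/
def IsLeviMonoid (S : Type*) [Monoid S] : Prop :=
  Equidivisible S ∧ (∃ l : S → ℕ, IsLengthFunction l) ∧ ∃ a : S, ¬IsUnit a

/-- An atom of a monoid: a non-unit that cannot be factored into two non-units. -/
def IsMonoidAtom {S : Type*} [Monoid S] (a : S) : Prop :=
  ¬IsUnit a ∧ ∀ b c : S, a = b * c → IsUnit b ∨ IsUnit c

/-- The principal two-sided ideal `SaS`. -/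
def tIdeal {S : Type*} [Monoid S] (a : S) : Set S := {x | ∃ s t : S, x = s * a * t}

/-!
A non-unit `a` generates a proper ideal `SaS`, since `1 = s * a * t` would force `l a = 0`.
If `SaS` is the maximum proper principal ideal, every atom `z` lies in it, and `z = s * a * t`
with `s`, `t` units because `z` is an atom; hence all atoms are two-sided associates of `a`.
Conversely, an atom `p` exists (a non-unit of minimal length), and by induction on length
every non-unit is either an atom, hence an associate of `p`, or a product `c * d` of non-units
with `c` shorter; so every non-unit lies in `SpS`, which is therefore the maximum.
-/

section

variable {S : Type*} [Monoid S]

def TwoSidedAssociated (x y : S) : Prop :=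
  ∃ g h : S, IsUnit g ∧ IsUnit h ∧ y = g * x * h

theorem TwoSidedAssociated.symm {x y : S} : TwoSidedAssociated x y → TwoSidedAssociated y x := by
  rintro ⟨_, _, ⟨u, rfl⟩, ⟨v, rfl⟩, rfl⟩
  exact ⟨↑u⁻¹, ↑v⁻¹, Units.isUnit _, Units.isUnit _, by simp [mul_assoc]⟩

theorem TwoSidedAssociated.trans {x y z : S} :
    TwoSidedAssociated x y → TwoSidedAssociated y z → TwoSidedAssociated x z := by
  rintro ⟨g, h, hg, hh, rfl⟩ ⟨g', h', hg', hh', rfl⟩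
  exact ⟨g' * g, h * h', hg'.mul hg, hh.mul hh', by simp only [mul_assoc]⟩

def IsIrreducibleMonoid (S : Type*) [Monoid S] : Prop :=
  ∀ x y : S, IsMonoidAtom x → IsMonoidAtom y → TwoSidedAssociated x y

theorem mem_tIdeal_self (a : S) : a ∈ tIdeal a := ⟨1, 1, by simp⟩

theorem mul_mem_tIdeal {a x : S} (hx : x ∈ tIdeal a) (y : S) : x * y ∈ tIdeal a := by
  obtain ⟨s, t, rfl⟩ := hx
  exact ⟨s, t * y, by simp only [mul_assoc]⟩

theorem tIdeal_subset_of_mem {a b : S} (hb : b ∈ tIdeal a) : tIdeal b ⊆ tIdeal a := by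
  obtain ⟨s, t, rfl⟩ := hb
  rintro _ ⟨s', t', rfl⟩
  exact ⟨s' * s, t * t', by simp only [mul_assoc]⟩

theorem tIdeal_eq_univ_of_isUnit {a : S} (ha : IsUnit a) : tIdeal a = Set.univ := by
  obtain ⟨u, rfl⟩ := ha
  exact Set.eq_univ_of_forall fun x => ⟨x * ↑u⁻¹, 1, by simp [mul_assoc]⟩

namespace IsLengthFunction

variable {l : S → ℕ}

theorem isUnit_mul_iff (hl : IsLengthFunction l) {a b : S} :
    IsUnit (a * b) ↔ IsUnit a ∧ IsUnit b := by
  rw [← hl.2, ← hl.2, ← hl.2, hl.1]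
  omega

theorem lt_mul_of_not_isUnit (hl : IsLengthFunction l) (c : S) {d : S} (hd : ¬IsUnit d) :
    l c < l (c * d) := by
  rw [hl.1]
  have : l d ≠ 0 := fun h => hd ((hl.2 d).1 h)
  omega

theorem tIdeal_ne_univ_iff (hl : IsLengthFunction l) (a : S) :
    tIdeal a ≠ Set.univ ↔ ¬IsUnit a := by
  refine ⟨fun h ha => h (tIdeal_eq_univ_of_isUnit ha), fun ha h => ha ?_⟩
  obtain ⟨s, t, hst⟩ := h ▸ Set.mem_univ (1 : S)
  have hunit : IsUnit (s * a * t) := hst ▸ isUnit_one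
  exact (hl.isUnit_mul_iff.1 (hl.isUnit_mul_iff.1 hunit).1).2

theorem exists_isMonoidAtom (hl : IsLengthFunction l) (hne : ∃ a : S, ¬IsUnit a) :
    ∃ p : S, IsMonoidAtom p := by
  obtain ⟨p, hp, hmin⟩ := (measure l).wf.has_min {b | ¬IsUnit b} hne
  refine ⟨p, hp, fun b c hbc => ?_⟩
  by_contra! hbc'
  exact hmin b hbc'.1 (hbc ▸ hl.lt_mul_of_not_isUnit b hbc'.2)

theorem mem_tIdeal_of_isIrreducibleMonoid (hl : IsLengthFunction l)
    (hirr : IsIrreducibleMonoid S) {p : S} (hp : IsMonoidAtom p) (b : S) (hb : ¬IsUnit b) :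
    b ∈ tIdeal p := by
  induction b using (measure l).wf.induction with
  | h b ih =>
    by_cases hatom : IsMonoidAtom b
    · obtain ⟨g, h, -, -, rfl⟩ := hirr p b hp hatom
      exact ⟨g, h, rfl⟩
    · obtain ⟨c, d, rfl, hc, hd⟩ : ∃ c d : S, b = c * d ∧ ¬IsUnit c ∧ ¬IsUnit d := by
        simpa [IsMonoidAtom, hb] using hatom
      exact mul_mem_tIdeal (ih c (hl.lt_mul_of_not_isUnit c hd) hc) d

end IsLengthFunction

theorem IsMonoidAtom.twoSidedAssociated_of_mem_tIdeal {l : S → ℕ} (hl : IsLengthFunction l)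
    {a z : S} (hz : IsMonoidAtom z) (ha : ¬IsUnit a) (h : z ∈ tIdeal a) :
    TwoSidedAssociated a z := by
  obtain ⟨s, t, rfl⟩ := h
  have hs : IsUnit s := (hz.2 s (a * t) (mul_assoc s a t)).resolve_right
    fun h => ha (hl.isUnit_mul_iff.1 h).1
  have ht : IsUnit t := (hz.2 (s * a) t rfl).resolve_left
    fun h => ha (hl.isUnit_mul_iff.1 h).2
  exact ⟨s, t, hs, ht, rfl⟩

end

/-- A Levi monoid has a maximum proper principal two-sided ideal iff it is
irreducible: any two atoms differ by units on both sides. -/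
theorem stmt10 {S : Type*} [Monoid S] (hS : IsLeviMonoid S) :
    (∃ a : S, tIdeal a ≠ Set.univ ∧
      ∀ b : S, tIdeal b ≠ Set.univ → tIdeal b ⊆ tIdeal a) ↔
    (∀ x y : S, IsMonoidAtom x → IsMonoidAtom y →
      ∃ g h : S, IsUnit g ∧ IsUnit h ∧ y = g * x * h) := by
  obtain ⟨-, ⟨l, hl⟩, hne⟩ := hS
  constructor
  · rintro ⟨a, ha, hmax⟩ x y hx hy
    have associated_of_atom (z : S) (hz : IsMonoidAtom z) : TwoSidedAssociated a z :=
      hz.twoSidedAssociated_of_mem_tIdeal hl ((hl.tIdeal_ne_univ_iff a).1 ha)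
        (hmax z ((hl.tIdeal_ne_univ_iff z).2 hz.1) (mem_tIdeal_self z))
    exact (associated_of_atom x hx).symm.trans (associated_of_atom y hy)
  · intro hirr
    obtain ⟨p, hp⟩ := hl.exists_isMonoidAtom hne
    refine ⟨p, (hl.tIdeal_ne_univ_iff p).2 hp.1, fun b hb => tIdeal_subset_of_mem ?_⟩
    exact hl.mem_tIdeal_of_isIrreducibleMonoid hirr hp b ((hl.tIdeal_ne_univ_iff b).1 hb)
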